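/- Let Ω be the cone of positive definite r×r real symmetric matrices and e the identity matrix. The map ι(z,v) = ((z − z^{1/2} v z^{1/2})/2, (z + z^{1/2} v z^{1/2})/2) is a bijection from Ω × {v ∈ Sym(r,ℝ) : e−v and e+v are positive definite} onto Ω × Ω. -/

import Mathlib

/-!
Write `w = z^{1/2}`. Then `ι(z, v) = (w (e - v) w / 2, w (e + v) w / 2)`, and congruence by the
invertible symmetric matrix `w` preserves positive definiteness in both directions, so for
`z ∈ Ω` the image lies in `Ω × Ω` exactly when `e ± v` are positive definite. The inverse is
`(x, y) ↦ (x + y, (x + y)^{-1/2} (y - x) (x + y)^{-1/2})`.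
-/

open Matrix
open scoped Classical

/-- The square root of a positive semidefinite matrix (junk value `0` otherwise). -/

noncomputable def msqrt {r : ℕ} (A : Matrix (Fin r) (Fin r) ℝ) : Matrix (Fin r) (Fin r) ℝ :=
  if h : A.PosSemidef then
    h.1.eigenvectorUnitary.1 * diagonal (fun i => Real.sqrt (h.1.eigenvalues i)) *
      (star h.1.eigenvectorUnitary : Matrix (Fin r) (Fin r) ℝ)
  else 0

/-- The polar-type map `ι(z,v) = ((z − z^{1/2}vz^{1/2})/2, (z + z^{1/2}vz^{1/2})/2)`. -/
noncomputable def iotaMap {r : ℕ} (p : Matrix (Fin r) (Fin r) ℝ × Matrix (Fin r) (Fin r) ℝ) :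
    Matrix (Fin r) (Fin r) ℝ × Matrix (Fin r) (Fin r) ℝ :=
  ((2:ℝ)⁻¹ • (p.1 - msqrt p.1 * p.2 * msqrt p.1),
   (2:ℝ)⁻¹ • (p.1 + msqrt p.1 * p.2 * msqrt p.1))

open scoped MatrixOrder

namespace Matrix

variable {n K : Type*}

theorem posDef_smul_iff [Field K] [LinearOrder K] [IsOrderedRing K] [StarRing K]
    [StarOrderedRing K] {A : Matrix n n K} {c : K} (hc : 0 < c) : (c • A).PosDef ↔ A.PosDef :=
  ⟨fun h => by simpa [smul_smul, hc.ne'] using h.smul (inv_pos.2 hc), fun h => h.smul hc⟩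

theorem IsHermitian.posDef_conj_iff [Fintype n] [DecidableEq n] [Ring K] [PartialOrder K]
    [StarRing K] {w A : Matrix n n K} (hw : w.IsHermitian) (hu : IsUnit w) :
    (w * A * w).PosDef ↔ A.PosDef := by
  simpa only [star_eq_conjTranspose, hw.eq] using IsUnit.posDef_star_left_conjugate_iff hu

end Matrix

section
variable {r : ℕ} {x y z v : Matrix (Fin r) (Fin r) ℝ}

theorem msqrt_eq_sqrt (hz : z.PosSemidef) : msqrt z = CFC.sqrt z := by
  rw [CFC.sqrt_eq_real_sqrt z hz.nonneg, cfcₙ_eq_cfc, hz.1.cfc_eq, msqrt, dif_pos hz]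
  rfl

theorem msqrt_mul_self (hz : z.PosSemidef) : msqrt z * msqrt z = z := by
  rw [msqrt_eq_sqrt hz, CFC.sqrt_mul_sqrt_self z hz.nonneg]

theorem isHermitian_msqrt (hz : z.PosSemidef) : (msqrt z).IsHermitian := by
  rw [msqrt_eq_sqrt hz]
  exact (CFC.sqrt_nonneg z).posSemidef.isHermitian

theorem isUnit_msqrt (hz : z.PosDef) : IsUnit (msqrt z) :=
  isUnit_of_mul_isUnit_left (msqrt_mul_self hz.posSemidef ▸ hz.isUnit)

theorem iotaMap_eq_conj (hz : z.PosSemidef) :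
    iotaMap (z, v) = ((2:ℝ)⁻¹ • (msqrt z * (1 - v) * msqrt z),
      (2:ℝ)⁻¹ • (msqrt z * (1 + v) * msqrt z)) := by
  simp only [iotaMap, Matrix.mul_sub, Matrix.sub_mul, Matrix.mul_add, Matrix.add_mul,
    Matrix.mul_one, msqrt_mul_self hz]

theorem iotaMap_mem_iff (hz : z.PosDef) :
    iotaMap (z, v) ∈ {x : Matrix (Fin r) (Fin r) ℝ | x.PosDef} ×ˢ {y | y.PosDef} ↔
      (1 - v).PosDef ∧ (1 + v).PosDef := by
  simp only [iotaMap_eq_conj hz.posSemidef, Set.mem_prod, Set.mem_ofPred_eq,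
    Matrix.posDef_smul_iff (by norm_num : (0:ℝ) < 2⁻¹),
    (isHermitian_msqrt hz.posSemidef).posDef_conj_iff (isUnit_msqrt hz)]

noncomputable def iotaInv (q : Matrix (Fin r) (Fin r) ℝ × Matrix (Fin r) (Fin r) ℝ) :
    Matrix (Fin r) (Fin r) ℝ × Matrix (Fin r) (Fin r) ℝ :=
  (q.1 + q.2, (msqrt (q.1 + q.2))⁻¹ * (q.2 - q.1) * (msqrt (q.1 + q.2))⁻¹)

theorem iotaInv_iotaMap (hz : z.PosDef) : iotaInv (iotaMap (z, v)) = (z, v) := by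
  have hu := (Matrix.isUnit_iff_isUnit_det _).1 (isUnit_msqrt hz)
  have hsum : (iotaMap (z, v)).1 + (iotaMap (z, v)).2 = z := by simp only [iotaMap]; module
  have hdiff : (iotaMap (z, v)).2 - (iotaMap (z, v)).1 = msqrt z * v * msqrt z := by
    simp only [iotaMap]; module
  rw [iotaInv, hsum, hdiff, Matrix.mul_assoc, Matrix.mul_nonsing_inv_cancel_right _ _ hu,
    Matrix.nonsing_inv_mul_cancel_left _ _ hu]

theorem iotaMap_iotaInv (hxy : (x + y).PosDef) : iotaMap (iotaInv (x, y)) = (x, y) := by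
  have hu := (Matrix.isUnit_iff_isUnit_det _).1 (isUnit_msqrt hxy)
  have hconj : msqrt (x + y) * ((msqrt (x + y))⁻¹ * (y - x) * (msqrt (x + y))⁻¹) *
      msqrt (x + y) = y - x := by
    rw [Matrix.mul_assoc, Matrix.nonsing_inv_mul_cancel_right _ _ hu,
      Matrix.mul_nonsing_inv_cancel_left _ _ hu]
  simp only [iotaInv, iotaMap, hconj, Prod.mk.injEq]
  constructor <;> module

theorem isSymm_iotaInv_snd (hx : x.IsHermitian) (hy : y.IsHermitian) (hxy : (x + y).PosDef) :
    (iotaInv (x, y)).2.IsSymm := by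
  have h := Matrix.isHermitian_mul_mul_conjTranspose (msqrt (x + y))⁻¹ (hy.sub hx)
  rw [(isHermitian_msqrt hxy.posSemidef).inv.eq, Matrix.isHermitian_iff_isSymm] at h
  exact h

end

/-- `ι` is a bijection from `Ω × ]−e,e[` onto `Ω × Ω`. -/
theorem iota_bijOn {r : ℕ} :
    Set.BijOn (iotaMap (r := r))
      ({z : Matrix (Fin r) (Fin r) ℝ | z.PosDef} ×ˢ
        {v : Matrix (Fin r) (Fin r) ℝ | v.IsSymm ∧ (1 - v).PosDef ∧ (1 + v).PosDef})
      ({x : Matrix (Fin r) (Fin r) ℝ | x.PosDef} ×ˢ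
        {y : Matrix (Fin r) (Fin r) ℝ | y.PosDef}) := by
  refine Set.InvOn.bijOn (f' := iotaInv) ⟨?_, ?_⟩ ?_ ?_
  · rintro ⟨z, v⟩ ⟨hz, -⟩
    exact iotaInv_iotaMap hz
  · rintro ⟨x, y⟩ ⟨hx, hy⟩
    exact iotaMap_iotaInv (hx.add hy)
  · rintro ⟨z, v⟩ ⟨hz, -, hv⟩
    exact (iotaMap_mem_iff hz).2 hv
  · rintro ⟨x, y⟩ ⟨hx, hy⟩
    have hxy : (x + y).PosDef := hx.add hy
    have hmem : iotaMap (iotaInv (x, y)) ∈ {x | x.PosDef} ×ˢ {y | y.PosDef} := by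
      rw [iotaMap_iotaInv hxy]
      exact ⟨hx, hy⟩
    exact ⟨hxy, isSymm_iotaInv_snd hx.1 hy.1 hxy, (iotaMap_mem_iff hxy).1 hmem⟩
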